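/- arXiv:math/0406495 — 2 statements merged into one kernel-verified Lean document; each statement's English description precedes it below -/
import Mathlib

section
/- Let a : ℝ → ℝ be a 2π-periodic measurable function with 0 < m ≤ a(θ) ≤ M for all θ, and let C ≠ 0 and φ ∈ ℝ. Define w(θ) = C·cos( (2π / ∫₀^{2π} a) · ∫₀^θ a(s) ds + φ ). Then w is 2π-periodic, locally absolutely continuous with square-integrable derivative on [0,2π], satisfies ∫₀^{2π} a w = 0, and attains equality in the Wirtinger-type inequality: ∫₀^{2π} a w² = ((1/(2π)) ∫₀^{2π} a)² ∫₀^{2π} (1/a)(w')². -/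
open MeasureTheory Real Set
open scoped NNReal ENNReal

noncomputable section

/-- `w` is locally absolutely continuous with (locally integrable) derivative `w'`. -/
def IsAbsCont (w w' : ℝ → ℝ) : Prop :=
  LocallyIntegrable w' volume ∧ ∀ θ : ℝ, w θ = w 0 + ∫ s in (0:ℝ)..θ, w' s

/-- `w` is `2π`-periodic, locally absolutely continuous with derivative `w'`,
and `w'` is square-integrable on `[0, 2π]`: the `2π`-periodic class in `H¹_loc(ℝ)`. -/
def MemH1Per (w w' : ℝ → ℝ) : Prop :=
  Function.Periodic w (2 * π) ∧ IsAbsCont w w' ∧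
  IntegrableOn (fun θ => w' θ ^ 2) (Ioc 0 (2 * π)) volume

open intervalIntegral in
lemma aux_intInt {a : ℝ → ℝ} {m M : ℝ} (hameas : Measurable a) (hm : 0 < m)
    (hbd : ∀ θ : ℝ, m ≤ a θ ∧ a θ ≤ M) (x y : ℝ) : IntervalIntegrable a volume x y := by
  apply IntervalIntegrable.mono_fun' (g := fun _ => M) intervalIntegrable_const
    hameas.aestronglyMeasurable
  filter_upwards with s
  rw [Real.norm_eq_abs, abs_of_nonneg (hm.le.trans (hbd s).1)]
  exact (hbd s).2

open intervalIntegral in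
lemma aux_gap {a : ℝ → ℝ} {m M : ℝ} (hameas : Measurable a) (hm : 0 < m)
    (hbd : ∀ θ : ℝ, m ≤ a θ ∧ a θ ≤ M) {x y : ℝ} (hxy : x ≤ y) :
    (∫ t in (0:ℝ)..x, a t) + m * (y - x) ≤ ∫ t in (0:ℝ)..y, a t := by
  have h1 : (∫ t in (0:ℝ)..x, a t) + (∫ t in x..y, a t) = ∫ t in (0:ℝ)..y, a t :=
    integral_add_adjacent_intervals (aux_intInt hameas hm hbd 0 x) (aux_intInt hameas hm hbd x y)
  have h2 : m * (y - x) ≤ ∫ t in x..y, a t := by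
    calc m * (y - x) = ∫ _ in x..y, m := by
          rw [intervalIntegral.integral_const]; ring_nf
    _ ≤ ∫ t in x..y, a t := by
        apply intervalIntegral.integral_mono_on hxy intervalIntegrable_const
          (aux_intInt hameas hm hbd x y)
        exact fun t _ => (hbd t).1
  linarith

lemma aux_strictMono {a : ℝ → ℝ} {m M : ℝ} (hameas : Measurable a) (hm : 0 < m)
    (hbd : ∀ θ : ℝ, m ≤ a θ ∧ a θ ≤ M) :
    StrictMono (fun θ : ℝ => ∫ t in (0:ℝ)..θ, a t) := by
  intro x y hxy
  have h := aux_gap hameas hm hbd hxy.le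
  have h2 : 0 < m * (y - x) := by
    have : 0 < y - x := by linarith
    positivity
  simp only []
  linarith

lemma aux_cont {a : ℝ → ℝ} {m M : ℝ} (hameas : Measurable a) (hm : 0 < m)
    (hbd : ∀ θ : ℝ, m ≤ a θ ∧ a θ ≤ M) :
    Continuous (fun θ : ℝ => ∫ t in (0:ℝ)..θ, a t) :=
  intervalIntegral.continuous_primitive (aux_intInt hameas hm hbd) 0

lemma aux_surj {a : ℝ → ℝ} {m M : ℝ} (hameas : Measurable a) (hm : 0 < m)
    (hbd : ∀ θ : ℝ, m ≤ a θ ∧ a θ ≤ M) :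
    Function.Surjective (fun θ : ℝ => ∫ t in (0:ℝ)..θ, a t) := by
  have htop : Filter.Tendsto (fun θ : ℝ => ∫ t in (0:ℝ)..θ, a t) Filter.atTop Filter.atTop := by
    apply Filter.tendsto_atTop_mono' _ (f₁ := fun θ : ℝ => m * θ)
    · filter_upwards [Filter.eventually_ge_atTop (0:ℝ)] with θ hθ
      have := aux_gap hameas hm hbd hθ
      simpa using this
    · exact (Filter.Tendsto.const_mul_atTop hm Filter.tendsto_id)
  have hbot : Filter.Tendsto (fun θ : ℝ => ∫ t in (0:ℝ)..θ, a t) Filter.atBot Filter.atBot := by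
    apply Filter.tendsto_atBot_mono' _ (f₁ := fun θ : ℝ => m * θ)
    · filter_upwards [Filter.eventually_le_atBot (0:ℝ)] with θ hθ
      have := aux_gap hameas hm hbd hθ
      simp at this
      linarith
    · exact (Filter.Tendsto.const_mul_atBot hm Filter.tendsto_id)
  exact (aux_cont hameas hm hbd).surjective htop hbot

open intervalIntegral in
lemma aux_wd_Ioc {a : ℝ → ℝ} {m M : ℝ} (hameas : Measurable a) (hm : 0 < m)
    (hbd : ∀ θ : ℝ, m ≤ a θ ∧ a θ ≤ M) {x y : ℝ} (hxy : x ≤ y) :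
    (volume.withDensity fun s => ENNReal.ofReal (a s)) (Ioc x y)
      = ENNReal.ofReal ((∫ t in (0:ℝ)..y, a t) - ∫ t in (0:ℝ)..x, a t) := by
  rw [withDensity_apply _ measurableSet_Ioc]
  have hint : IntegrableOn a (Ioc x y) volume := ((aux_intInt hameas hm hbd x y).1)
  rw [← ofReal_integral_eq_lintegral_ofReal hint
    (Filter.Eventually.of_forall fun s => hm.le.trans (hbd s).1)]
  congr 1
  rw [← intervalIntegral.integral_of_le hxy]
  have := integral_add_adjacent_intervals (aux_intInt hameas hm hbd 0 x)
    (aux_intInt hameas hm hbd x y)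
  linarith

lemma aux_map {a : ℝ → ℝ} {m M : ℝ} (hameas : Measurable a) (hm : 0 < m)
    (hbd : ∀ θ : ℝ, m ≤ a θ ∧ a θ ≤ M) :
    Measure.map (fun θ : ℝ => ∫ t in (0:ℝ)..θ, a t)
      (volume.withDensity fun s => ENNReal.ofReal (a s)) = volume := by
  set A : ℝ → ℝ := fun θ : ℝ => ∫ t in (0:ℝ)..θ, a t with hA
  set e : ℝ ≃o ℝ := StrictMono.orderIsoOfSurjective A (aux_strictMono hameas hm hbd)
    (aux_surj hameas hm hbd) with he
  have hpre : ∀ c d : ℝ, A ⁻¹' Ioc c d = Ioc (e.symm c) (e.symm d) := by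
    intro c d
    ext s
    simp only [mem_preimage, mem_Ioc]
    constructor
    · rintro ⟨h1, h2⟩
      constructor
      · have := e.symm.strictMono.lt_iff_lt (a := c) (b := A s)
        rw [show e.symm (A s) = s from e.symm_apply_apply s] at this
        exact this.mpr h1
      · have := e.symm.monotone (a := A s) (b := d)
        rw [show e.symm (A s) = s from e.symm_apply_apply s] at this
        exact this h2
    · rintro ⟨h1, h2⟩
      constructor
      · have h3 := (aux_strictMono hameas hm hbd) h1
        have h4 : A (e.symm c) = c := e.apply_symm_apply c
        change A (e.symm c) < A s at h3
        rwa [h4] at h3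
      · have h3 := (aux_strictMono hameas hm hbd).monotone h2
        have h4 : A (e.symm d) = d := e.apply_symm_apply d
        change A s ≤ A (e.symm d) at h3
        rwa [h4] at h3
  have hAmeas : Measurable A := (aux_cont hameas hm hbd).measurable
  apply MeasureTheory.Measure.ext_of_Ioc'
  · intro c d hcd
    rw [Measure.map_apply hAmeas measurableSet_Ioc, hpre,
      aux_wd_Ioc hameas hm hbd (e.symm.monotone hcd.le)]
    exact ENNReal.ofReal_ne_top
  · intro c d hcd
    rw [Measure.map_apply hAmeas measurableSet_Ioc, hpre,
      aux_wd_Ioc hameas hm hbd (e.symm.monotone hcd.le)]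
    rw [show (∫ t in (0:ℝ)..(e.symm d), a t) = d from e.apply_symm_apply d,
      show (∫ t in (0:ℝ)..(e.symm c), a t) = c from e.apply_symm_apply c,
      Real.volume_Ioc]

lemma aux_pre {a : ℝ → ℝ} {m M : ℝ} (hameas : Measurable a) (hm : 0 < m)
    (hbd : ∀ θ : ℝ, m ≤ a θ ∧ a θ ≤ M) (x y : ℝ) :
    (fun θ : ℝ => ∫ t in (0:ℝ)..θ, a t) ⁻¹'
      (Ioc (∫ t in (0:ℝ)..x, a t) (∫ t in (0:ℝ)..y, a t)) = Ioc x y := by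
  have hsm := aux_strictMono hameas hm hbd
  ext s
  simp only [mem_preimage, mem_Ioc]
  rw [hsm.lt_iff_lt, hsm.le_iff_le]

lemma aux_subst_le {a : ℝ → ℝ} {m M : ℝ} (hameas : Measurable a) (hm : 0 < m)
    (hbd : ∀ θ : ℝ, m ≤ a θ ∧ a θ ≤ M) (f : ℝ → ℝ) (hf : Continuous f) {x y : ℝ}
    (hxy : x ≤ y) :
    ∫ s in Ioc x y, a s * f (∫ t in (0:ℝ)..s, a t)
      = ∫ u in Ioc (∫ t in (0:ℝ)..x, a t) (∫ t in (0:ℝ)..y, a t), f u := by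
  set A : ℝ → ℝ := fun θ : ℝ => ∫ t in (0:ℝ)..θ, a t with hA
  have hAmeas : Measurable A := (aux_cont hameas hm hbd).measurable
  have h1 : (∫ u in Ioc (A x) (A y), f u)
      = ∫ u in Ioc (A x) (A y), f u ∂(Measure.map A
          (volume.withDensity fun s => ENNReal.ofReal (a s))) := by
    rw [aux_map hameas hm hbd]
  rw [h1]
  rw [Measure.restrict_map hAmeas measurableSet_Ioc, aux_pre hameas hm hbd,
    integral_map hAmeas.aemeasurable hf.aestronglyMeasurable,
    restrict_withDensity measurableSet_Ioc]
  have h2 : (fun s : ℝ => ENNReal.ofReal (a s))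
      = fun s : ℝ => (((a s).toNNReal : ℝ≥0) : ℝ≥0∞) := rfl
  rw [h2, integral_withDensity_eq_integral_smul (f := fun s => (a s).toNNReal)
    (measurable_real_toNNReal.comp hameas)]
  apply MeasureTheory.integral_congr_ae
  filter_upwards with s
  rw [NNReal.smul_def, Real.coe_toNNReal _ (hm.le.trans (hbd s).1), smul_eq_mul]

lemma aux_subst {a : ℝ → ℝ} {m M : ℝ} (hameas : Measurable a) (hm : 0 < m)
    (hbd : ∀ θ : ℝ, m ≤ a θ ∧ a θ ≤ M) (f : ℝ → ℝ) (hf : Continuous f) (x y : ℝ) :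
    ∫ s in x..y, a s * f (∫ t in (0:ℝ)..s, a t)
      = ∫ u in (∫ t in (0:ℝ)..x, a t)..(∫ t in (0:ℝ)..y, a t), f u := by
  rcases le_total x y with hxy | hxy
  · rw [intervalIntegral.integral_of_le hxy,
      intervalIntegral.integral_of_le ((aux_strictMono hameas hm hbd).monotone hxy),
      aux_subst_le hameas hm hbd f hf hxy]
  · rw [intervalIntegral.integral_of_ge hxy,
      intervalIntegral.integral_of_ge ((aux_strictMono hameas hm hbd).monotone hxy),
      aux_subst_le hameas hm hbd f hf hxy]

open intervalIntegral in
/-- **The functions `w(θ) = C cos( (2π/∫₀^{2π}a) ∫₀^θ a + φ )` attain equality in the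
sharp Wirtinger-type inequality.** -/
theorem sharp_wirtinger_equality_attained
    (a : ℝ → ℝ) (hameas : Measurable a) (haper : Function.Periodic a (2 * π))
    (m M : ℝ) (hm : 0 < m) (hbd : ∀ θ : ℝ, m ≤ a θ ∧ a θ ≤ M)
    (C φ : ℝ) (hC : C ≠ 0)
    (w : ℝ → ℝ)
    (hwdef : ∀ θ : ℝ, w θ = C * Real.cos (2 * π / (∫ s in (0:ℝ)..(2 * π), a s) *
      (∫ s in (0:ℝ)..θ, a s) + φ)) :
    ∃ w' : ℝ → ℝ, MemH1Per w w' ∧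
      (∫ θ in (0:ℝ)..(2 * π), a θ * w θ = 0) ∧
      ∫ θ in (0:ℝ)..(2 * π), a θ * w θ ^ 2 =
        (1 / (2 * π) * ∫ θ in (0:ℝ)..(2 * π), a θ) ^ 2 *
          ∫ θ in (0:ℝ)..(2 * π), 1 / a θ * w' θ ^ 2 := by
  have hπ : (0:ℝ) < 2 * π := Real.two_pi_pos
  have hA0 : (∫ s in (0:ℝ)..(0:ℝ), a s) = 0 := intervalIntegral.integral_same
  set L : ℝ := ∫ s in (0:ℝ)..(2 * π), a s with hLdef
  have hLpos : 0 < L := by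
    have h := aux_gap hameas hm hbd (x := 0) (y := 2 * π) hπ.le
    rw [hA0] at h
    nlinarith
  set k : ℝ := 2 * π / L with hkdef
  have hkpos : 0 < k := by positivity
  have hkL : k * L = 2 * π := by rw [hkdef]; field_simp
  have hAper : ∀ θ : ℝ, (∫ t in (0:ℝ)..(θ + 2 * π), a t) = (∫ t in (0:ℝ)..θ, a t) + L := by
    intro θ
    have h1 : (∫ t in (0:ℝ)..θ, a t) + (∫ t in θ..(θ + 2 * π), a t)
        = ∫ t in (0:ℝ)..(θ + 2 * π), a t :=
      integral_add_adjacent_intervals (aux_intInt hameas hm hbd 0 θ)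
        (aux_intInt hameas hm hbd θ (θ + 2 * π))
    have h2 : (∫ t in θ..(θ + 2 * π), a t) = ∫ t in (0:ℝ)..(0 + 2 * π), a t :=
      haper.intervalIntegral_add_eq θ 0
    rw [← h1, h2, zero_add, ← hLdef]
  have hAcont : Continuous (fun θ : ℝ => ∫ t in (0:ℝ)..θ, a t) := aux_cont hameas hm hbd
  have hlin : ∀ u : ℝ, HasDerivAt (fun v : ℝ => k * v + φ) k u := fun u => by
    simpa using ((hasDerivAt_id u).const_mul k).add_const φ
  have hgderiv : ∀ u : ℝ, HasDerivAt (fun v : ℝ => C * Real.cos (k * v + φ))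
      (-(C * k) * Real.sin (k * u + φ)) u := by
    intro u
    have h := ((hlin u).cos).const_mul C
    refine h.congr_deriv ?_
    ring
  -- the chunk FTC computation
  have hlc : Continuous (fun u : ℝ => k * u + φ) :=
    (continuous_const.mul continuous_id).add continuous_const
  have hsincont : Continuous (fun u : ℝ => -(C * k) * Real.sin (k * u + φ)) :=
    continuous_const.mul (Real.continuous_sin.comp hlc)
  have hchunk : ∀ x y : ℝ,
      (∫ s in x..y, -(C * k) * Real.sin (k * (∫ t in (0:ℝ)..s, a t) + φ) * a s)
        = C * Real.cos (k * (∫ t in (0:ℝ)..y, a t) + φ)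
          - C * Real.cos (k * (∫ t in (0:ℝ)..x, a t) + φ) := by
    intro x y
    have h1 : (∫ s in x..y, -(C * k) * Real.sin (k * (∫ t in (0:ℝ)..s, a t) + φ) * a s)
        = ∫ s in x..y, a s *
            (fun u => -(C * k) * Real.sin (k * u + φ)) (∫ t in (0:ℝ)..s, a t) := by
      apply intervalIntegral.integral_congr
      intro s _
      simp only []
      ring
    rw [h1, aux_subst hameas hm hbd _ hsincont x y]
    exact intervalIntegral.integral_eq_sub_of_hasDerivAt (fun u _ => hgderiv u)
      (hsincont.intervalIntegrable _ _)
  -- measurability and bound of w'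
  have hw'meas : Measurable
      (fun θ : ℝ => -(C * k) * Real.sin (k * (∫ t in (0:ℝ)..θ, a t) + φ) * a θ) := by
    apply Measurable.mul _ hameas
    apply Measurable.const_mul
    exact Real.continuous_sin.measurable.comp ((hAcont.measurable.const_mul k).add_const φ)
  have hw'bd : ∀ θ : ℝ,
      ‖-(C * k) * Real.sin (k * (∫ t in (0:ℝ)..θ, a t) + φ) * a θ‖ ≤ |C * k| * M := by
    intro θ
    rw [Real.norm_eq_abs, abs_mul, abs_mul, abs_neg]
    have hs : |Real.sin (k * (∫ t in (0:ℝ)..θ, a t) + φ)| ≤ 1 := Real.abs_sin_le_one _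
    have ha : |a θ| ≤ M := by
      rw [abs_of_nonneg (hm.le.trans (hbd θ).1)]; exact (hbd θ).2
    calc |C * k| * |Real.sin (k * (∫ t in (0:ℝ)..θ, a t) + φ)| * |a θ|
        ≤ |C * k| * 1 * M := by gcongr <;> positivity
      _ = |C * k| * M := by ring
  refine ⟨fun θ => -(C * k) * Real.sin (k * (∫ t in (0:ℝ)..θ, a t) + φ) * a θ,
    ⟨?_, ⟨?_, ?_⟩, ?_⟩, ?_, ?_⟩
  · -- periodicity
    intro θ
    rw [hwdef, hwdef, hAper θ, mul_add, hkL,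
      show k * (∫ s in (0:ℝ)..θ, a s) + 2 * π + φ
          = (k * (∫ s in (0:ℝ)..θ, a s) + φ) + 2 * π from by ring,
      Real.cos_add_two_pi]
  · -- locally integrable
    rw [MeasureTheory.locallyIntegrable_iff]
    intro K hK
    exact Measure.integrableOn_of_bounded hK.measure_lt_top.ne hw'meas.aestronglyMeasurable
      (Filter.Eventually.of_forall fun θ => hw'bd θ)
  · -- FTC
    intro θ
    rw [hwdef θ, hwdef 0, hchunk 0 θ, hA0]
    ring
  · -- square integrable on Ioc
    apply Measure.integrableOn_of_bounded (M := (|C * k| * M) ^ 2) measure_Ioc_lt_top.ne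
      ((hw'meas.pow_const 2).aestronglyMeasurable)
    filter_upwards with θ
    rw [norm_pow]
    exact pow_le_pow_left₀ (norm_nonneg _) (hw'bd θ) 2
  · -- orthogonality
    have hfc : Continuous (fun u : ℝ => C * Real.cos (k * u + φ)) :=
      continuous_const.mul (Real.continuous_cos.comp hlc)
    have h1 : (∫ θ in (0:ℝ)..(2 * π), a θ * w θ)
        = ∫ s in (0:ℝ)..(2 * π), a s *
            (fun u => C * Real.cos (k * u + φ)) (∫ t in (0:ℝ)..s, a t) := by
      apply intervalIntegral.integral_congr
      intro s _
      simp only [hwdef]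
    rw [h1, aux_subst hameas hm hbd _ hfc 0 (2 * π), hA0, ← hLdef]
    have hanti : ∀ u : ℝ, HasDerivAt (fun v : ℝ => C / k * Real.sin (k * v + φ))
        (C * Real.cos (k * u + φ)) u := by
      intro u
      have h := ((hlin u).sin).const_mul (C / k)
      refine h.congr_deriv ?_
      field_simp
    rw [intervalIntegral.integral_eq_sub_of_hasDerivAt (fun u _ => hanti u)
      (hfc.intervalIntegrable _ _), hkL, mul_zero, zero_add,
      show 2 * π + φ = φ + 2 * π from by ring, Real.sin_add_two_pi, sub_self]
  · -- the equality
    have hccont : Continuous (fun u : ℝ => C ^ 2 * Real.cos (k * u + φ) ^ 2) :=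
      continuous_const.mul ((Real.continuous_cos.comp hlc).pow 2)
    have hscont : Continuous (fun u : ℝ => (C * k) ^ 2 * Real.sin (k * u + φ) ^ 2) :=
      continuous_const.mul ((Real.continuous_sin.comp hlc).pow 2)
    have hL1 : (∫ θ in (0:ℝ)..(2 * π), a θ * w θ ^ 2)
        = ∫ u in (0:ℝ)..L, C ^ 2 * Real.cos (k * u + φ) ^ 2 := by
      have h1 : (∫ θ in (0:ℝ)..(2 * π), a θ * w θ ^ 2)
          = ∫ s in (0:ℝ)..(2 * π), a s *
              (fun u => C ^ 2 * Real.cos (k * u + φ) ^ 2) (∫ t in (0:ℝ)..s, a t) := by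
        apply intervalIntegral.integral_congr
        intro s _
        simp only [hwdef]
        ring
      rw [h1, aux_subst hameas hm hbd _ hccont 0 (2 * π), hA0, ← hLdef]
    have hR1 : (∫ θ in (0:ℝ)..(2 * π),
          1 / a θ * (-(C * k) * Real.sin (k * (∫ t in (0:ℝ)..θ, a t) + φ) * a θ) ^ 2)
        = ∫ u in (0:ℝ)..L, (C * k) ^ 2 * Real.sin (k * u + φ) ^ 2 := by
      have h1 : (∫ θ in (0:ℝ)..(2 * π),
            1 / a θ * (-(C * k) * Real.sin (k * (∫ t in (0:ℝ)..θ, a t) + φ) * a θ) ^ 2)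
          = ∫ s in (0:ℝ)..(2 * π), a s *
              (fun u => (C * k) ^ 2 * Real.sin (k * u + φ) ^ 2) (∫ t in (0:ℝ)..s, a t) := by
        apply intervalIntegral.integral_congr
        intro s _
        have ha : a s ≠ 0 := ne_of_gt (lt_of_lt_of_le hm (hbd s).1)
        simp only []
        field_simp
      rw [h1, aux_subst hameas hm hbd _ hscont 0 (2 * π), hA0, ← hLdef]
    have hcs : (∫ u in (0:ℝ)..L, Real.cos (k * u + φ) ^ 2)
        = ∫ u in (0:ℝ)..L, Real.sin (k * u + φ) ^ 2 := by
      have hc2 : Continuous (fun u : ℝ => Real.cos (k * u + φ) ^ 2) :=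
        (Real.continuous_cos.comp hlc).pow 2
      have hs2 : Continuous (fun u : ℝ => Real.sin (k * u + φ) ^ 2) :=
        (Real.continuous_sin.comp hlc).pow 2
      have hanti2 : ∀ u : ℝ, HasDerivAt (fun v : ℝ => Real.sin (2 * (k * v + φ)) / (2 * k))
          (Real.cos (k * u + φ) ^ 2 - Real.sin (k * u + φ) ^ 2) u := by
        intro u
        have hlin2 : HasDerivAt (fun v : ℝ => 2 * (k * v + φ)) (2 * k) u := by
          simpa using ((hlin u).const_mul 2)
        have h := (hlin2.sin).div_const (2 * k)
        refine h.congr_deriv ?_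
        have hcc : Real.cos (2 * (k * u + φ))
            = Real.cos (k * u + φ) ^ 2 - Real.sin (k * u + φ) ^ 2 := by
          rw [Real.cos_two_mul]
          nlinarith [Real.sin_sq_add_cos_sq (k * u + φ)]
        rw [← hcc]
        field_simp
      have hdiff : (∫ u in (0:ℝ)..L,
          (Real.cos (k * u + φ) ^ 2 - Real.sin (k * u + φ) ^ 2)) = 0 := by
        rw [intervalIntegral.integral_eq_sub_of_hasDerivAt (fun u _ => hanti2 u)
          ((hc2.sub hs2).intervalIntegrable _ _), hkL, mul_zero, zero_add,
          show 2 * (2 * π + φ) = (2 * φ + 2 * π) + 2 * π from by ring,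
          Real.sin_add_two_pi, Real.sin_add_two_pi, sub_self]
      have hsub := intervalIntegral.integral_sub (hc2.intervalIntegrable (μ := volume) (0:ℝ) L)
        (hs2.intervalIntegrable (μ := volume) (0:ℝ) L)
      rw [hsub] at hdiff
      linarith
    rw [hL1, hR1, intervalIntegral.integral_const_mul, intervalIntegral.integral_const_mul, hcs]
    have hsc : (1 / (2 * π) * L) ^ 2 * (C * k) ^ 2 = C ^ 2 := by
      rw [hkdef]
      field_simp
    rw [← hsc]
    ring
end
end

section
/- Let a : ℝ → ℝ be a 2π-periodic measurable function with 0 < m ≤ a(θ) ≤ M for all θ. Consider the Rayleigh quotient I(w) = (∫₀^{2π} (1/a)(w')²) / (∫₀^{2π} a w²) over the class X₀ of 2π-periodic, locally absolutely continuous functions w : ℝ → ℝ with square-integrable derivative on [0,2π], not almost everywhere zero, satisfying the constraint ∫₀^{2π} a w = 0. Then the infimum of I over X₀ equals (2π / ∫₀^{2π} a)², and this infimum is attained by some w̲ ∈ X₀. -/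
open MeasureTheory Real Set Function AddCircle
open scoped ENNReal NNReal

noncomputable section

namespace Rayleigh

def tauFun (d : ℝ → ℝ) : ℝ → ℝ := fun θ => ∫ s in (0:ℝ)..θ, d s

def sigmaFun (d : ℝ → ℝ) : ℝ → ℝ := Function.invFun (tauFun d)

variable {d : ℝ → ℝ} {m' M' : ℝ}

lemma d_II (hd : Measurable d) (hbd : ∀ θ, m' ≤ d θ ∧ d θ ≤ M') (hm' : 0 < m') (x y : ℝ) :
    IntervalIntegrable d volume x y := by
  rw [intervalIntegrable_iff]
  refine Integrable.mono' (g := fun _ => M') ?_ hd.aestronglyMeasurable.restrict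
    (ae_of_all _ fun θ => ?_)
  · exact integrableOn_const measure_Ioc_lt_top.ne
  · rw [Real.norm_eq_abs, abs_of_nonneg (le_trans hm'.le (hbd θ).1)]; exact (hbd θ).2

lemma tau_zero (d : ℝ → ℝ) : tauFun d 0 = 0 := by simp [tauFun]

lemma tau_sub (hd : Measurable d) (hbd : ∀ θ, m' ≤ d θ ∧ d θ ≤ M') (hm' : 0 < m') (x y : ℝ) :
    tauFun d y - tauFun d x = ∫ s in x..y, d s := by
  have := intervalIntegral.integral_add_adjacent_intervals
    (d_II hd hbd hm' 0 x) (d_II hd hbd hm' x y)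
  unfold tauFun; linarith

lemma tau_bound (hd : Measurable d) (hbd : ∀ θ, m' ≤ d θ ∧ d θ ≤ M') (hm' : 0 < m')
    {x y : ℝ} (hxy : x ≤ y) :
    m' * (y - x) ≤ tauFun d y - tauFun d x ∧ tauFun d y - tauFun d x ≤ M' * (y - x) := by
  rw [tau_sub hd hbd hm']
  constructor
  · have := intervalIntegral.integral_mono_on hxy (intervalIntegrable_const (c := m'))
      (d_II hd hbd hm' x y) (fun θ _ => (hbd θ).1)
    simpa [mul_comm] using this
  · have := intervalIntegral.integral_mono_on hxy (d_II hd hbd hm' x y)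
      (intervalIntegrable_const (c := M')) (fun θ _ => (hbd θ).2)
    simpa [mul_comm] using this

lemma tau_strictMono (hd : Measurable d) (hbd : ∀ θ, m' ≤ d θ ∧ d θ ≤ M') (hm' : 0 < m') :
    StrictMono (tauFun d) := by
  intro x y hxy
  have := (tau_bound hd hbd hm' hxy.le).1
  nlinarith

lemma tau_continuous (hd : Measurable d) (hbd : ∀ θ, m' ≤ d θ ∧ d θ ≤ M') (hm' : 0 < m') :
    Continuous (tauFun d) := by
  have hM' : 0 ≤ M' := le_trans hm'.le (le_trans (hbd 0).1 (hbd 0).2)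
  apply LipschitzWith.continuous (K := ⟨M', hM'⟩)
  apply LipschitzWith.of_dist_le_mul
  have key : ∀ x y, x ≤ y → dist (tauFun d x) (tauFun d y) ≤ M' * dist x y := by
    intro x y h
    have hb := tau_bound hd hbd hm' h
    rw [Real.dist_eq, Real.dist_eq, abs_sub_comm,
      abs_of_nonneg (by nlinarith [hb.1] : (0:ℝ) ≤ tauFun d y - tauFun d x),
      abs_of_nonpos (by linarith : x - y ≤ 0)]
    linarith [hb.2]
  intro x y
  rcases le_total x y with h | h
  · exact key x y h
  · rw [dist_comm, dist_comm (x:ℝ) y]; exact key y x h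

lemma tau_tendsto_atTop (hd : Measurable d) (hbd : ∀ θ, m' ≤ d θ ∧ d θ ≤ M') (hm' : 0 < m') :
    Filter.Tendsto (tauFun d) Filter.atTop Filter.atTop := by
  refine Filter.tendsto_atTop_mono' _ ?_ (Filter.Tendsto.const_mul_atTop hm' Filter.tendsto_id)
  filter_upwards [Filter.eventually_ge_atTop (0:ℝ)] with x hx
  have := (tau_bound hd hbd hm' hx).1
  rw [tau_zero] at this
  simp only [Filter.tendsto_id', id_eq]
  linarith

lemma tau_tendsto_atBot (hd : Measurable d) (hbd : ∀ θ, m' ≤ d θ ∧ d θ ≤ M') (hm' : 0 < m') :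
    Filter.Tendsto (tauFun d) Filter.atBot Filter.atBot := by
  refine Filter.tendsto_atBot_mono' _ ?_ (Filter.Tendsto.const_mul_atBot hm' Filter.tendsto_id)
  filter_upwards [Filter.eventually_le_atBot (0:ℝ)] with x hx
  have := (tau_bound hd hbd hm' hx).1
  rw [tau_zero] at this
  simp only [id_eq]
  linarith

lemma tau_surjective (hd : Measurable d) (hbd : ∀ θ, m' ≤ d θ ∧ d θ ≤ M') (hm' : 0 < m') :
    Surjective (tauFun d) :=
  Continuous.surjective (tau_continuous hd hbd hm')
    (tau_tendsto_atTop hd hbd hm') (tau_tendsto_atBot hd hbd hm')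

lemma sigma_tau (hd : Measurable d) (hbd : ∀ θ, m' ≤ d θ ∧ d θ ≤ M') (hm' : 0 < m') (θ : ℝ) :
    sigmaFun d (tauFun d θ) = θ :=
  Function.leftInverse_invFun (tau_strictMono hd hbd hm').injective θ

lemma tau_sigma (hd : Measurable d) (hbd : ∀ θ, m' ≤ d θ ∧ d θ ≤ M') (hm' : 0 < m') (u : ℝ) :
    tauFun d (sigmaFun d u) = u :=
  Function.rightInverse_invFun (tau_surjective hd hbd hm') u

lemma sigma_strictMono (hd : Measurable d) (hbd : ∀ θ, m' ≤ d θ ∧ d θ ≤ M') (hm' : 0 < m') :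
    StrictMono (sigmaFun d) := by
  intro u v huv
  by_contra h
  push_neg at h
  have := (tau_strictMono hd hbd hm').monotone h
  rw [tau_sigma hd hbd hm', tau_sigma hd hbd hm'] at this
  exact absurd this (not_le.2 huv)

lemma sigma_surjective (hd : Measurable d) (hbd : ∀ θ, m' ≤ d θ ∧ d θ ≤ M') (hm' : 0 < m') :
    Surjective (sigmaFun d) :=
  fun θ => ⟨tauFun d θ, sigma_tau hd hbd hm' θ⟩

lemma sigma_continuous (hd : Measurable d) (hbd : ∀ θ, m' ≤ d θ ∧ d θ ≤ M') (hm' : 0 < m') :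
    Continuous (sigmaFun d) :=
  Monotone.continuous_of_surjective (sigma_strictMono hd hbd hm').monotone
    (sigma_surjective hd hbd hm')

lemma sigma_zero (hd : Measurable d) (hbd : ∀ θ, m' ≤ d θ ∧ d θ ≤ M') (hm' : 0 < m') :
    sigmaFun d 0 = 0 := by
  have := sigma_tau hd hbd hm' 0
  rwa [tau_zero] at this

lemma tau_lt_iff (hd : Measurable d) (hbd : ∀ θ, m' ≤ d θ ∧ d θ ≤ M') (hm' : 0 < m')
    {u θ : ℝ} : u < tauFun d θ ↔ sigmaFun d u < θ := by
  constructor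
  · intro h
    have := (sigma_strictMono hd hbd hm') h
    rwa [sigma_tau hd hbd hm'] at this
  · intro h
    have := (tau_strictMono hd hbd hm') h
    rwa [tau_sigma hd hbd hm'] at this

lemma tau_le_iff (hd : Measurable d) (hbd : ∀ θ, m' ≤ d θ ∧ d θ ≤ M') (hm' : 0 < m')
    {u θ : ℝ} : tauFun d θ ≤ u ↔ θ ≤ sigmaFun d u := by
  rw [← not_lt, ← not_lt, tau_lt_iff hd hbd hm']

lemma tau_preimage_Ioc (hd : Measurable d) (hbd : ∀ θ, m' ≤ d θ ∧ d θ ≤ M') (hm' : 0 < m')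
    (x y : ℝ) : tauFun d ⁻¹' (Ioc x y) = Ioc (sigmaFun d x) (sigmaFun d y) := by
  ext θ
  simp only [mem_preimage, mem_Ioc]
  rw [tau_lt_iff hd hbd hm', tau_le_iff hd hbd hm']

def muD (d : ℝ → ℝ) : Measure ℝ := volume.withDensity (fun θ => ENNReal.ofReal (d θ))

lemma d_nonneg (hbd : ∀ θ, m' ≤ d θ ∧ d θ ≤ M') (hm' : 0 < m') (θ : ℝ) : 0 ≤ d θ :=
  le_trans hm'.le (hbd θ).1

lemma muD_Ioc (hd : Measurable d) (hbd : ∀ θ, m' ≤ d θ ∧ d θ ≤ M') (hm' : 0 < m')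
    {x y : ℝ} (hxy : x ≤ y) :
    muD d (Ioc x y) = ENNReal.ofReal (tauFun d y - tauFun d x) := by
  rw [muD, withDensity_apply _ measurableSet_Ioc,
    tau_sub hd hbd hm', intervalIntegral.integral_of_le hxy,
    ofReal_integral_eq_lintegral_ofReal]
  · exact (d_II hd hbd hm' x y).1
  · exact ae_of_all _ (d_nonneg hbd hm')

lemma map_tau (hd : Measurable d) (hbd : ∀ θ, m' ≤ d θ ∧ d θ ≤ M') (hm' : 0 < m') :
    Measure.map (tauFun d) (muD d) = volume := by
  refine Measure.ext_of_Ioc' _ _ (fun x y hxy => ?_) (fun x y hxy => ?_) <;>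
    rw [Measure.map_apply (tau_continuous hd hbd hm').measurable measurableSet_Ioc,
      tau_preimage_Ioc hd hbd hm',
      muD_Ioc hd hbd hm' ((sigma_strictMono hd hbd hm').monotone hxy.le),
      tau_sigma hd hbd hm', tau_sigma hd hbd hm']
  · exact ENNReal.ofReal_ne_top
  · rw [Real.volume_Ioc]

lemma restrict_transfer (hd : Measurable d) (hbd : ∀ θ, m' ≤ d θ ∧ d θ ≤ M') (hm' : 0 < m')
    (x y : ℝ) :
    volume.restrict (Ioc x y) =
      Measure.map (tauFun d) ((muD d).restrict (Ioc (sigmaFun d x) (sigmaFun d y))) := by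
  rw [← map_tau hd hbd hm',
    Measure.restrict_map (tau_continuous hd hbd hm').measurable measurableSet_Ioc,
    tau_preimage_Ioc hd hbd hm']

lemma integral_transfer (hd : Measurable d) (hbd : ∀ θ, m' ≤ d θ ∧ d θ ≤ M') (hm' : 0 < m')
    {f : ℝ → ℝ} {x y : ℝ} (hf : AEStronglyMeasurable f (volume.restrict (Ioc x y))) :
    ∫ u in Ioc x y, f u =
      ∫ θ in Ioc (sigmaFun d x) (sigmaFun d y), f (tauFun d θ) * d θ := by
  rw [restrict_transfer hd hbd hm' x y] at hf ⊢
  rw [integral_map (tau_continuous hd hbd hm').measurable.aemeasurable hf,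
    muD, restrict_withDensity measurableSet_Ioc]
  have hdens : (fun θ => ENNReal.ofReal (d θ)) = (fun θ => ((d θ).toNNReal : ℝ≥0∞)) := rfl
  rw [hdens, integral_withDensity_eq_integral_smul (hd.real_toNNReal)]
  refine setIntegral_congr_fun measurableSet_Ioc (fun θ _ => ?_)
  simp only [NNReal.smul_def, smul_eq_mul, Real.coe_toNNReal _ (d_nonneg hbd hm' θ)]
  ring

lemma integrableOn_transfer (hd : Measurable d) (hbd : ∀ θ, m' ≤ d θ ∧ d θ ≤ M') (hm' : 0 < m')
    {f : ℝ → ℝ} {x y : ℝ} (hf : AEStronglyMeasurable f (volume.restrict (Ioc x y))) :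
    IntegrableOn f (Ioc x y) ↔
      IntegrableOn (fun θ => f (tauFun d θ) * d θ) (Ioc (sigmaFun d x) (sigmaFun d y)) := by
  unfold IntegrableOn
  rw [restrict_transfer hd hbd hm' x y] at hf ⊢
  rw [integrable_map_measure hf (tau_continuous hd hbd hm').measurable.aemeasurable,
    muD, restrict_withDensity measurableSet_Ioc]
  have hdens : (fun θ => ENNReal.ofReal (d θ)) = (fun θ => ((d θ).toNNReal : ℝ≥0∞)) := rfl
  rw [hdens, integrable_withDensity_iff_integrable_smul (hd.real_toNNReal)]
  constructor <;> intro h <;> refine h.congr (ae_of_all _ fun θ => ?_) <;>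
    simp only [NNReal.smul_def, smul_eq_mul, comp_apply,
      Real.coe_toNNReal _ (d_nonneg hbd hm' θ)] <;> ring


instance fact_two_pi_pos : Fact ((0:ℝ) < 2*π) := ⟨Real.two_pi_pos⟩

lemma two_pi_pos' : (0:ℝ) < 2 * π := Real.two_pi_pos

lemma norm_exp_eq_one {n : ℤ} (x : ℝ) : ‖Complex.exp (-(n:ℂ) * Complex.I * x)‖ = 1 := by
  rw [Complex.norm_exp]
  have : (-(n:ℂ) * Complex.I * x).re = 0 := by
    simp [Complex.mul_re]
  rw [this, Real.exp_zero]

lemma fubini_swap {g : ℝ → ℝ} (hgm : Measurable g)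
    (hg1 : IntegrableOn g (Ioc 0 (2*π)) volume) (c : ℂ)
    (hce : ∀ x : ℝ, ‖Complex.exp (c * x)‖ = 1) :
    ∫ x in Ioc (0:ℝ) (2*π), Complex.exp (c*x) * (∫ s in Ioc (0:ℝ) x, (g s : ℂ)) =
    ∫ s in Ioc (0:ℝ) (2*π), (g s : ℂ) * (∫ x in Ioc s (2*π), Complex.exp (c*x)) := by
  set T := 2*π with hT
  have hTpos : (0:ℝ) < T := Real.two_pi_pos
  set F : ℝ → ℝ → ℂ := fun x s =>
    ({q : ℝ×ℝ | q.2 ≤ q.1}.indicator (fun q => Complex.exp (c*q.1) * (g q.2 : ℂ))) (x, s) with hF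
  have hFunc : uncurry F = ({q : ℝ×ℝ | q.2 ≤ q.1}.indicator
      (fun q => Complex.exp (c*q.1) * (g q.2 : ℂ))) := by
    funext q; cases q; rfl
  have hmeasF : AEStronglyMeasurable (uncurry F)
      ((volume.restrict (Ioc 0 T)).prod (volume.restrict (Ioc 0 T))) := by
    rw [hFunc]
    apply Measurable.aestronglyMeasurable
    apply Measurable.indicator
    · exact (Complex.measurable_exp.comp (measurable_const.mul
        (Complex.measurable_ofReal.comp measurable_fst))).mul
        (Complex.measurable_ofReal.comp (hgm.comp measurable_snd))
    · exact measurableSet_le measurable_snd measurable_fst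
  have hGbound : Integrable (fun q : ℝ×ℝ => |g q.2|)
      ((volume.restrict (Ioc 0 T)).prod (volume.restrict (Ioc 0 T))) := by
    rw [integrable_prod_iff]
    · refine ⟨ae_of_all _ fun x => hg1.norm, ?_⟩
      simp only [Real.norm_eq_abs, abs_abs]
      exact integrable_const _
    · exact ((hgm.comp measurable_snd).abs).aestronglyMeasurable
  have hintF : Integrable (uncurry F)
      ((volume.restrict (Ioc 0 T)).prod (volume.restrict (Ioc 0 T))) := by
    refine Integrable.mono' hGbound hmeasF (ae_of_all _ fun q => ?_)
    rw [hFunc]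
    refine le_trans (norm_indicator_le_norm_self _ _) ?_
    rw [norm_mul, hce q.1, one_mul, Complex.norm_real]
    exact le_refl _
  have swap := integral_integral_swap hintF
  have lhs : ∀ x ∈ Ioc (0:ℝ) T, (∫ s in Ioc (0:ℝ) T, F x s)
      = Complex.exp (c*x) * (∫ s in Ioc (0:ℝ) x, (g s : ℂ)) := by
    intro x hx
    have : ∀ s : ℝ, F x s = (Iic x).indicator (fun s => Complex.exp (c*x) * (g s : ℂ)) s := by
      intro s
      rw [hF]
      simp only [indicator, mem_setOf_eq, mem_Iic]
    simp_rw [this]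
    rw [setIntegral_indicator measurableSet_Iic]
    have hset : Ioc (0:ℝ) T ∩ Iic x = Ioc 0 x := by
      rw [Ioc_inter_Iic, min_eq_right hx.2]
    rw [hset, integral_const_mul]
  have rhs : ∀ s ∈ Ioc (0:ℝ) T, (∫ x in Ioc (0:ℝ) T, F x s)
      = (g s : ℂ) * (∫ x in Ioc s T, Complex.exp (c*x)) := by
    intro s hs
    have : ∀ x : ℝ, F x s = (Ici s).indicator (fun x => Complex.exp (c*x) * (g s : ℂ)) x := by
      intro x
      rw [hF]
      simp only [indicator, mem_setOf_eq, mem_Ici]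
    simp_rw [this]
    rw [setIntegral_indicator measurableSet_Ici]
    have hset : Ioc (0:ℝ) T ∩ Ici s = Icc s T := by
      ext y
      simp only [mem_inter_iff, mem_Ioc, mem_Icc, mem_Ici]
      constructor
      · rintro ⟨⟨_, h2⟩, h3⟩; exact ⟨h3, h2⟩
      · rintro ⟨h1, h2⟩; exact ⟨⟨lt_of_lt_of_le hs.1 h1, h2⟩, h1⟩
    rw [hset, integral_Icc_eq_integral_Ioc]
    rw [← integral_const_mul]
    congr 1; ext x; ring
  calc ∫ x in Ioc (0:ℝ) T, Complex.exp (c*x) * (∫ s in Ioc (0:ℝ) x, (g s : ℂ))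
      = ∫ x in Ioc (0:ℝ) T, (∫ s in Ioc (0:ℝ) T, F x s) :=
        (setIntegral_congr_fun measurableSet_Ioc lhs).symm
    _ = ∫ s in Ioc (0:ℝ) T, (∫ x in Ioc (0:ℝ) T, F x s) := swap
    _ = ∫ s in Ioc (0:ℝ) T, (g s : ℂ) * (∫ x in Ioc s T, Complex.exp (c*x)) :=
        setIntegral_congr_fun measurableSet_Ioc rhs

lemma integral_gc_eq (g : ℝ → ℝ) {x y : ℝ} :
    ∫ s in Ioc x y, (g s : ℂ) = ((∫ s in Ioc x y, g s : ℝ) : ℂ) :=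
  integral_ofReal

lemma coeff_rel {v g : ℝ → ℝ} (hvc : Continuous v) (hgm : Measurable g)
    (hgi : Integrable g volume)
    (hft : ∀ u ∈ Icc (0:ℝ) (2*π), v u = v 0 + ∫ s in (0:ℝ)..u, g s)
    (hper : v (2*π) = v 0) {n : ℤ} (hn : n ≠ 0) :
    ‖fourierCoeffOn Real.two_pi_pos (fun u => (v u : ℂ)) n‖ ≤
    ‖fourierCoeffOn Real.two_pi_pos (fun u => (g u : ℂ)) n‖ := by
  haveI : Fact (0 < 2 * π) := ⟨Real.two_pi_pos⟩
  set T := 2 * π with hTdef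
  have hTpos : (0:ℝ) < T := Real.two_pi_pos
  set c : ℂ := -(n:ℂ) * Complex.I with hc
  have hcn : (n:ℂ) ≠ 0 := Int.cast_ne_zero.2 hn
  have hc0 : c ≠ 0 := by
    simp only [hc, ne_eq, mul_eq_zero, neg_eq_zero, Complex.I_ne_zero, or_false]
    exact hcn
  have hce : ∀ x : ℝ, ‖Complex.exp (c * x)‖ = 1 := fun x => norm_exp_eq_one x
  -- fourier monomial is exp (c x)
  have hfour : ∀ x : ℝ, (fourier (-n) (x : AddCircle (T - 0)) : ℂ) = Complex.exp (c * x) := by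
    intro x
    rw [fourier_coe_apply]
    congr 1
    have hT0 : ((T - 0 : ℝ) : ℂ) ≠ 0 := by
      rw [sub_zero]; exact_mod_cast hTpos.ne'
    rw [div_eq_iff hT0, hc, hTdef]
    push_cast
    ring
  -- exp at endpoints
  have heT : Complex.exp (c * T) = 1 := by
    have : c * T = (-n : ℤ) * (2 * π * Complex.I) := by
      push_cast [hc, hTdef]; ring
    rw [this, Complex.exp_int_mul_two_pi_mul_I]
  have he0 : Complex.exp (c * (0:ℝ)) = 1 := by
    norm_num
  have hexpint : ∀ x y : ℝ, x ≤ y → ∫ s in Ioc x y, Complex.exp (c * s)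
      = (Complex.exp (c * y) - Complex.exp (c * x)) / c := by
    intro x y hxy
    rw [← intervalIntegral.integral_of_le hxy, integral_exp_mul_complex hc0]
  -- total integral of g is 0
  have hgT : (∫ s in Ioc (0:ℝ) T, g s) = 0 := by
    have h1 := hft T ⟨hTpos.le, le_refl _⟩
    rw [intervalIntegral.integral_of_le hTpos.le] at h1
    rw [hper] at h1
    linarith
  -- FTC on Ioc
  have hftIoc : ∀ x ∈ Ioc (0:ℝ) T, (v x : ℂ) = (v 0 : ℂ) + ∫ s in Ioc (0:ℝ) x, (g s : ℂ) := by
    intro x hx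
    rw [integral_gc_eq, ← intervalIntegral.integral_of_le hx.1.le]
    rw [← Complex.ofReal_add]
    exact_mod_cast congrArg (fun r : ℝ => (r : ℂ)) (hft x ⟨hx.1.le, hx.2⟩)
  -- complex primitive
  set P : ℝ → ℂ := fun x => ((∫ s in (0:ℝ)..x, g s : ℝ) : ℂ) with hP
  have hPcont : Continuous P :=
    Complex.continuous_ofReal.comp
      (intervalIntegral.continuous_primitive (fun a b => hgi.intervalIntegrable) 0)
  have hPeq : ∀ x ∈ Ioc (0:ℝ) T, P x = ∫ s in Ioc (0:ℝ) x, (g s : ℂ) := by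
    intro x hx
    show ((∫ s in (0:ℝ)..x, g s : ℝ) : ℂ) = _
    rw [intervalIntegral.integral_of_le hx.1.le]
    exact (integral_gc_eq g).symm
  have hgcInt : IntegrableOn (fun s : ℝ => (g s : ℂ)) (Ioc (0:ℝ) T) volume :=
    hgi.integrableOn.ofReal
  have hexpgcInt : IntegrableOn (fun s : ℝ => Complex.exp (c*s) * (g s : ℂ)) (Ioc (0:ℝ) T) volume := by
    refine Integrable.bdd_mul (c := 1) hgcInt ?_ (ae_of_all _ fun x => (hce x).le)
    exact (Complex.continuous_exp.comp
      (continuous_const.mul Complex.continuous_ofReal)).aestronglyMeasurable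
  -- key identity
  have key : ∫ x in Ioc (0:ℝ) T, Complex.exp (c*x) * (v x : ℂ)
      = -(1/c) * ∫ s in Ioc (0:ℝ) T, Complex.exp (c*s) * (g s : ℂ) := by
    have step1 : ∫ x in Ioc (0:ℝ) T, Complex.exp (c*x) * (v x : ℂ)
        = ∫ x in Ioc (0:ℝ) T, (Complex.exp (c*x) * (v 0 : ℂ) + Complex.exp (c*x) * P x) := by
      refine setIntegral_congr_fun measurableSet_Ioc (fun x hx => ?_)
      rw [hPeq x hx, hftIoc x hx]; ring
    have hexpInt : IntegrableOn (fun x : ℝ => Complex.exp (c*x) * (v 0 : ℂ)) (Ioc (0:ℝ) T) volume :=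
      Continuous.integrableOn_Ioc
        ((Complex.continuous_exp.comp (continuous_const.mul Complex.continuous_ofReal)).mul
          continuous_const)
    have hePInt : IntegrableOn (fun x : ℝ => Complex.exp (c*x) * P x) (Ioc (0:ℝ) T) volume :=
      Continuous.integrableOn_Ioc
        ((Complex.continuous_exp.comp (continuous_const.mul Complex.continuous_ofReal)).mul
          hPcont)
    rw [step1, integral_add hexpInt hePInt]
    have term1 : ∫ x in Ioc (0:ℝ) T, Complex.exp (c*x) * (v 0 : ℂ) = 0 := by
      rw [integral_mul_const, hexpint 0 T hTpos.le, heT, he0]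
      simp
    have term2 : ∫ x in Ioc (0:ℝ) T, Complex.exp (c*x) * P x
        = -(1/c) * ∫ s in Ioc (0:ℝ) T, Complex.exp (c*s) * (g s : ℂ) := by
      have e1 : ∫ x in Ioc (0:ℝ) T, Complex.exp (c*x) * P x
          = ∫ x in Ioc (0:ℝ) T, Complex.exp (c*x) * (∫ s in Ioc (0:ℝ) x, (g s : ℂ)) :=
        setIntegral_congr_fun measurableSet_Ioc (fun x hx => by rw [hPeq x hx])
      rw [e1, fubini_swap hgm hgi.integrableOn c hce]
      have e2 : ∀ s ∈ Ioc (0:ℝ) T, (g s : ℂ) * (∫ x in Ioc s T, Complex.exp (c*x))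
          = (1/c) * (g s : ℂ) - (1/c) * (Complex.exp (c*s) * (g s : ℂ)) := by
        intro s hs
        rw [hexpint s T hs.2, heT]
        field_simp
      rw [setIntegral_congr_fun measurableSet_Ioc e2,
        integral_sub (hgcInt.const_mul _) (hexpgcInt.const_mul _),
        integral_const_mul, integral_const_mul, integral_gc_eq, hgT]
      push_cast
      ring
    rw [term1, term2, zero_add]
  -- put it together
  rw [fourierCoeffOn_eq_integral, fourierCoeffOn_eq_integral]
  simp only [smul_eq_mul, hfour]
  rw [intervalIntegral.integral_of_le hTpos.le, intervalIntegral.integral_of_le hTpos.le]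
  rw [key]
  rw [norm_smul, norm_smul, norm_mul]
  have hnormc : ‖-(1/c)‖ ≤ 1 := by
    rw [norm_neg, norm_div, norm_one, hc]
    rw [norm_mul, Complex.norm_I, mul_one, norm_neg, Complex.norm_intCast]
    rw [div_le_one (by exact_mod_cast abs_pos.2 hn)]
    exact_mod_cast Int.one_le_abs hn
  calc ‖(1 / (T - 0))‖ * (‖-(1/c)‖ * ‖∫ s in Ioc (0:ℝ) T, Complex.exp (c*s) * (g s : ℂ)‖)
      ≤ ‖(1 / (T - 0))‖ * (1 * ‖∫ s in Ioc (0:ℝ) T, Complex.exp (c*s) * (g s : ℂ)‖) := by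
        apply mul_le_mul_of_nonneg_left _ (norm_nonneg _)
        exact mul_le_mul_of_nonneg_right hnormc (norm_nonneg _)
    _ = ‖(1 / (T - 0))‖ * ‖∫ s in Ioc (0:ℝ) T, Complex.exp (c*s) * (g s : ℂ)‖ := by rw [one_mul]

lemma haar_eq : (haarAddCircle : Measure (AddCircle (2*π)))
    = (ENNReal.ofReal (2*π))⁻¹ • (volume : Measure (AddCircle (2*π))) := by
  rw [AddCircle.volume_eq_smul_haarAddCircle, smul_smul, ENNReal.inv_mul_cancel, one_smul]
  · exact (ENNReal.ofReal_pos.2 Real.two_pi_pos).ne'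
  · exact ENNReal.ofReal_ne_top

lemma parseval {f : ℝ → ℝ} (hfm : Measurable f)
    (hf2 : IntegrableOn (fun u => f u ^ 2) (Ioc 0 (2*π)) volume) :
    Summable (fun n : ℤ => ‖fourierCoeffOn Real.two_pi_pos (fun u => (f u : ℂ)) n‖ ^ 2) ∧
    2 * π * ∑' n : ℤ, ‖fourierCoeffOn Real.two_pi_pos (fun u => (f u : ℂ)) n‖ ^ 2
      = ∫ u in Ioc (0:ℝ) (2*π), f u ^ 2 := by
  set fc : ℝ → ℂ := fun u => (f u : ℂ) with hfc
  set F : AddCircle (2*π) → ℂ := AddCircle.liftIoc (2*π) 0 fc with hF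
  have hFmeas : Measurable F := by
    exact ((Complex.measurable_ofReal.comp hfm).comp measurable_subtype_coe).comp
      (AddCircle.measurableEquivIoc (2*π) 0).measurable
  have hFcoe : ∀ u : ℝ, u ∈ Ioc (0:ℝ) (0 + 2*π) → F (↑u) = fc u := by
    intro u hu
    exact AddCircle.liftIoc_coe_apply hu
  -- MemLp
  have hfcLp : MemLp fc 2 (volume.restrict (Ioc (0:ℝ) (0 + 2*π))) := by
    rw [memLp_two_iff_integrable_sq_norm (f := fc)
      ((Complex.measurable_ofReal.comp hfm).aestronglyMeasurable :
        AEStronglyMeasurable fc (volume.restrict (Ioc (0:ℝ) (0 + 2*π))))]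
    have hsq : (fun u : ℝ => ‖fc u‖ ^ 2) = fun u => f u ^ 2 := by
      funext u
      rw [hfc]
      simp [Complex.norm_real, Real.norm_eq_abs, sq_abs]
    rw [hsq, zero_add]
    exact hf2
  have hFvol : MemLp F 2 (volume : Measure (AddCircle (2*π))) := by
    rw [← (AddCircle.measurePreserving_mk (2*π) 0).map_eq]
    rw [memLp_map_measure_iff hFmeas.aestronglyMeasurable
      AddCircle.measurable_mk'.aemeasurable]
    apply hfcLp.ae_eq
    exact ae_restrict_of_forall_mem measurableSet_Ioc (fun u hu => (hFcoe u hu).symm)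
  have hFmem : MemLp F 2 (haarAddCircle : Measure (AddCircle (2*π))) := by
    rw [haar_eq]
    exact hFvol.smul_measure (by simp [Real.pi_pos])
  set FL : Lp ℂ 2 (haarAddCircle : Measure (AddCircle (2*π))) := hFmem.toLp F with hFL
  have hcoeff : ∀ n : ℤ, fourierCoeff (FL : AddCircle (2*π) → ℂ) n
      = fourierCoeffOn Real.two_pi_pos fc n := by
    intro n
    have h0 : fourierCoeff (FL : AddCircle (2*π) → ℂ) n = fourierCoeff F n := by
      apply integral_congr_ae
      filter_upwards [hFmem.coeFn_toLp] with t ht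
      rw [ht]
    rw [h0, hF]
    have h1 := fourierCoeff_liftIoc_eq (T := 2*π) (a := 0) fc n
    simp only [zero_add] at h1
    exact h1
  -- summability
  have hsum : Summable (fun n : ℤ => ‖fourierCoeffOn Real.two_pi_pos fc n‖ ^ 2) := by
    have hmem := lp.memℓp (fourierBasis.repr FL)
    have h2 : (0:ℝ) < (2 : ℝ≥0∞).toReal := by norm_num
    have := (memℓp_gen_iff h2).1 hmem
    apply Summable.congr this
    intro n
    rw [fourierBasis_repr, hcoeff n]
    norm_num
  refine ⟨hsum, ?_⟩
  -- Parseval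
  have hpars := tsum_sq_fourierCoeff FL
  have htsum_eq : ∑' n : ℤ, ‖fourierCoeffOn Real.two_pi_pos fc n‖ ^ 2
      = ∫ t : AddCircle (2*π), ‖FL t‖ ^ 2 ∂haarAddCircle := by
    rw [← hpars]
    exact tsum_congr (fun n => by rw [hcoeff n])
  have hI1 : ∫ t : AddCircle (2*π), ‖FL t‖ ^ 2 ∂haarAddCircle
      = ∫ t : AddCircle (2*π), ‖F t‖ ^ 2 ∂haarAddCircle := by
    apply integral_congr_ae
    filter_upwards [hFmem.coeFn_toLp] with t ht
    rw [ht]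
  have hI2 : ∫ t : AddCircle (2*π), ‖F t‖ ^ 2 ∂(volume : Measure (AddCircle (2*π)))
      = 2 * π * ∫ t : AddCircle (2*π), ‖F t‖ ^ 2 ∂haarAddCircle := by
    rw [AddCircle.volume_eq_smul_haarAddCircle, integral_smul_measure,
      ENNReal.toReal_ofReal Real.two_pi_pos.le, smul_eq_mul]
  have hI3 : ∫ u in Ioc (0:ℝ) (0 + 2*π), ‖F (↑u)‖ ^ 2
      = ∫ t : AddCircle (2*π), ‖F t‖ ^ 2 ∂(volume : Measure (AddCircle (2*π))) :=
    AddCircle.integral_preimage (2*π) 0 (fun t => ‖F t‖ ^ 2)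
  have hI4 : ∫ u in Ioc (0:ℝ) (0 + 2*π), ‖F (↑u)‖ ^ 2 = ∫ u in Ioc (0:ℝ) (2*π), f u ^ 2 := by
    rw [zero_add]
    refine setIntegral_congr_fun measurableSet_Ioc (fun u hu => ?_)
    rw [hFcoe u (by rwa [zero_add])]
    simp [hfc, Complex.norm_real, sq_abs]
  rw [htsum_eq, hI1, ← hI2, ← hI3, hI4]

lemma coeff_zero {v : ℝ → ℝ} (hmean : ∫ u in Ioc (0:ℝ) (2*π), v u = 0) :
    fourierCoeffOn Real.two_pi_pos (fun u => (v u : ℂ)) 0 = 0 := by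
  rw [fourierCoeffOn_eq_integral]
  simp only [neg_zero, fourier_zero, one_smul]
  rw [intervalIntegral.integral_of_le Real.two_pi_pos.le]
  rw [integral_gc_eq, hmean]
  simp

lemma wirtinger {v g : ℝ → ℝ} (hvc : Continuous v) (hgm : Measurable g)
    (hgi : Integrable g volume)
    (hg2 : IntegrableOn (fun u => g u ^ 2) (Ioc 0 (2*π)) volume)
    (hft : ∀ u ∈ Icc (0:ℝ) (2*π), v u = v 0 + ∫ s in (0:ℝ)..u, g s)
    (hper : v (2*π) = v 0)
    (hmean : ∫ u in Ioc (0:ℝ) (2*π), v u = 0) :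
    ∫ u in Ioc (0:ℝ) (2*π), v u ^ 2 ≤ ∫ u in Ioc (0:ℝ) (2*π), g u ^ 2 := by
  have hv2 : IntegrableOn (fun u => v u ^ 2) (Ioc 0 (2*π)) volume :=
    (hvc.pow 2).integrableOn_Ioc
  obtain ⟨hsumv, hveq⟩ := parseval hvc.measurable hv2
  obtain ⟨hsumg, hgeq⟩ := parseval hgm hg2
  have hterm : ∀ n : ℤ, ‖fourierCoeffOn Real.two_pi_pos (fun u => (v u : ℂ)) n‖ ^ 2
      ≤ ‖fourierCoeffOn Real.two_pi_pos (fun u => (g u : ℂ)) n‖ ^ 2 := by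
    intro n
    rcases eq_or_ne n 0 with rfl | hn
    · rw [coeff_zero hmean]
      simp [sq_nonneg]
    · exact pow_le_pow_left₀ (norm_nonneg _) (coeff_rel hvc hgm hgi hft hper hn) 2
  have := Summable.tsum_le_tsum hterm hsumv hsumg
  rw [← hveq, ← hgeq]
  have h2π : (0:ℝ) < 2*π := Real.two_pi_pos
  nlinarith [this]


end Rayleigh

set_option maxHeartbeats 2000000 in
/-- **The Rayleigh quotient `I(w) = (∫₀^{2π} (1/a) w'²)/(∫₀^{2π} a w²)`, over the class of
`2π`-periodic `H¹_loc` functions with `∫₀^{2π} a w = 0` not a.e. zero, has least value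
`(2π/∫₀^{2π} a)²`, attained by some minimizer.** -/
theorem rayleigh_quotient_infimum
    (a : ℝ → ℝ) (hameas : Measurable a) (haper : Function.Periodic a (2 * π))
    (m M : ℝ) (hm : 0 < m) (hbd : ∀ θ : ℝ, m ≤ a θ ∧ a θ ≤ M) :
    IsLeast
      { I : ℝ | ∃ w w' : ℝ → ℝ, MemH1Per w w' ∧
          ¬ (∀ᵐ θ : ℝ ∂volume, w θ = 0) ∧
          (∫ θ in (0:ℝ)..(2 * π), a θ * w θ = 0) ∧
          I = (∫ θ in (0:ℝ)..(2 * π), 1 / a θ * w' θ ^ 2) /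
              (∫ θ in (0:ℝ)..(2 * π), a θ * w θ ^ 2) }
      ((2 * π / ∫ s in (0:ℝ)..(2 * π), a s) ^ 2) := by
  classical
  have h2π : (0:ℝ) < 2 * π := Real.two_pi_pos
  set A := ∫ s in (0:ℝ)..(2 * π), a s with hAdef
  have haII : ∀ x y : ℝ, IntervalIntegrable a volume x y := Rayleigh.d_II hameas hbd hm
  have hA : 0 < A := by
    have h1 := intervalIntegral.integral_mono_on h2π.le (intervalIntegrable_const (c := m))
      (haII 0 (2*π)) (fun θ _ => (hbd θ).1)
    simp only [intervalIntegral.integral_const, smul_eq_mul, sub_zero] at h1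
    have h3 : 0 < 2*π*m := by positivity
    rw [hAdef]; nlinarith
  have hc2 : 0 < 2*π/A := div_pos h2π hA
  set d : ℝ → ℝ := fun θ => (2*π/A) * a θ with hddef
  have hdm : Measurable d := measurable_const.mul hameas
  set m' : ℝ := (2*π/A) * m with hm'def
  set M' : ℝ := (2*π/A) * M with hM'def
  have hm' : 0 < m' := mul_pos hc2 hm
  have hbd' : ∀ θ, m' ≤ d θ ∧ d θ ≤ M' := fun θ =>
    ⟨mul_le_mul_of_nonneg_left (hbd θ).1 hc2.le, mul_le_mul_of_nonneg_left (hbd θ).2 hc2.le⟩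
  have hM'pos : 0 < M' := lt_of_lt_of_le hm' (le_trans (hbd' 0).1 (hbd' 0).2)
  have hτd : ∀ x y : ℝ, Rayleigh.tauFun d y - Rayleigh.tauFun d x = ∫ s in x..y, d s :=
    Rayleigh.tau_sub hdm hbd' hm'
  have hτ0 : Rayleigh.tauFun d 0 = 0 := Rayleigh.tau_zero d
  have hτmono : StrictMono (Rayleigh.tauFun d) := Rayleigh.tau_strictMono hdm hbd' hm'
  have hτ2π : Rayleigh.tauFun d (2*π) = 2*π := by
    have h1 := hτd 0 (2*π)
    rw [hτ0, sub_zero] at h1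
    rw [h1, hddef, intervalIntegral.integral_const_mul, ← hAdef]
    field_simp
  have hστ : ∀ θ, Rayleigh.sigmaFun d (Rayleigh.tauFun d θ) = θ := Rayleigh.sigma_tau hdm hbd' hm'
  have hτσ : ∀ u, Rayleigh.tauFun d (Rayleigh.sigmaFun d u) = u := Rayleigh.tau_sigma hdm hbd' hm'
  have hσ0 : Rayleigh.sigmaFun d 0 = 0 := Rayleigh.sigma_zero hdm hbd' hm'
  have hσ2π : Rayleigh.sigmaFun d (2*π) = 2*π := by
    have := hστ (2*π); rwa [hτ2π] at this
  have hτcont : Continuous (Rayleigh.tauFun d) := Rayleigh.tau_continuous hdm hbd' hm'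
  have hσcont : Continuous (Rayleigh.sigmaFun d) := Rayleigh.sigma_continuous hdm hbd' hm'
  have hTrans : ∀ f : ℝ → ℝ, AEStronglyMeasurable f (volume.restrict (Ioc 0 (2*π))) →
      ∫ u in Ioc (0:ℝ) (2*π), f u = ∫ θ in Ioc (0:ℝ) (2*π), f (Rayleigh.tauFun d θ) * d θ := by
    intro f hf
    have := Rayleigh.integral_transfer hdm hbd' hm' (x := 0) (y := 2*π) hf
    rwa [hσ0, hσ2π] at this
  have hTransInt : ∀ f : ℝ → ℝ, AEStronglyMeasurable f (volume.restrict (Ioc 0 (2*π))) →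
      (IntegrableOn f (Ioc 0 (2*π)) ↔
        IntegrableOn (fun θ => f (Rayleigh.tauFun d θ) * d θ) (Ioc 0 (2*π))) := by
    intro f hf
    have := Rayleigh.integrableOn_transfer hdm hbd' hm' (x := 0) (y := 2*π) hf
    rwa [hσ0, hσ2π] at this
  have hdpos : ∀ θ, 0 < d θ := fun θ => lt_of_lt_of_le hm' (hbd' θ).1
  have hapos : ∀ θ, 0 < a θ := fun θ => lt_of_lt_of_le hm (hbd θ).1
  constructor
  · -- MEMBERSHIP : w = sin ∘ τ is a minimizer
    have hd_per : Function.Periodic d (2*π) := by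
      intro θ
      simp only [hddef]
      rw [haper θ]
    have hτ_add : ∀ θ, Rayleigh.tauFun d (θ + 2*π) = Rayleigh.tauFun d θ + 2*π := by
      intro θ
      have h1 := hτd θ (θ + 2*π)
      have h2 : ∫ s in θ..θ + 2*π, d s = ∫ s in (0:ℝ)..(0 + 2*π), d s :=
        hd_per.intervalIntegral_add_eq θ 0
      have h3 : ∫ s in (0:ℝ)..(0 + 2*π), d s = 2*π := by
        rw [zero_add]
        have h4 := hτd 0 (2*π)
        rw [hτ0, sub_zero] at h4
        rw [← h4, hτ2π]
      rw [h2, h3] at h1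
      linarith
    have hwcont : Continuous (fun θ => Real.sin (Rayleigh.tauFun d θ)) :=
      Real.continuous_sin.comp hτcont
    have hw'meas : Measurable (fun θ => Real.cos (Rayleigh.tauFun d θ) * d θ) :=
      (Real.measurable_cos.comp hτcont.measurable).mul hdm
    have hw'bdd : ∀ θ, |Real.cos (Rayleigh.tauFun d θ) * d θ| ≤ M' := by
      intro θ
      rw [abs_mul, abs_of_pos (hdpos θ)]
      calc |Real.cos (Rayleigh.tauFun d θ)| * d θ ≤ 1 * M' :=
            mul_le_mul (Real.abs_cos_le_one _) (hbd' θ).2 (hdpos θ).le zero_le_one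
        _ = M' := one_mul _
    have hτnn : ∀ θ, 0 ≤ θ → 0 ≤ Rayleigh.tauFun d θ := by
      intro θ h
      rcases eq_or_lt_of_le h with rfl | h'
      · rw [hτ0]
      · have := hτmono h'; rw [hτ0] at this; exact this.le
    have hτnp : ∀ θ, θ ≤ 0 → Rayleigh.tauFun d θ ≤ 0 := by
      intro θ h
      rcases eq_or_lt_of_le h with rfl | h'
      · rw [hτ0]
      · have := hτmono h'; rw [hτ0] at this; exact this.le
    have hFTC : ∀ θ : ℝ, Real.sin (Rayleigh.tauFun d θ) =
        Real.sin (Rayleigh.tauFun d 0) + ∫ s in (0:ℝ)..θ, Real.cos (Rayleigh.tauFun d s) * d s := by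
      intro θ
      rw [hτ0, Real.sin_zero, zero_add]
      rcases le_total 0 θ with h | h
      · rw [intervalIntegral.integral_of_le h]
        have ht := Rayleigh.integral_transfer hdm hbd' hm' (f := Real.cos) (x := 0)
          (y := Rayleigh.tauFun d θ) Real.continuous_cos.aestronglyMeasurable.restrict
        rw [hσ0, hστ θ] at ht
        rw [← ht, ← intervalIntegral.integral_of_le (hτnn θ h), integral_cos, Real.sin_zero,
          sub_zero]
      · rw [intervalIntegral.integral_of_ge h]
        have ht := Rayleigh.integral_transfer hdm hbd' hm' (f := Real.cos)
          (x := Rayleigh.tauFun d θ) (y := 0) Real.continuous_cos.aestronglyMeasurable.restrict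
        rw [hσ0, hστ θ] at ht
        rw [← ht, ← intervalIntegral.integral_of_le (hτnp θ h), integral_cos, Real.sin_zero]
        ring
    refine ⟨fun θ => Real.sin (Rayleigh.tauFun d θ),
      fun θ => Real.cos (Rayleigh.tauFun d θ) * d θ, ⟨?_, ⟨?_, hFTC⟩, ?_⟩, ?_, ?_, ?_⟩
    · -- periodic
      intro θ
      simp only
      rw [hτ_add θ, Real.sin_add_two_pi]
    · -- locally integrable derivative
      rw [locallyIntegrable_iff]
      intro K hK
      refine Integrable.mono' (g := fun _ => M')
        (integrableOn_const hK.measure_lt_top.ne)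
        hw'meas.aestronglyMeasurable.restrict (ae_of_all _ fun θ => ?_)
      rw [Real.norm_eq_abs]
      exact hw'bdd θ
    · -- derivative squared integrable
      refine Integrable.mono' (g := fun _ => M'^2)
        (integrableOn_const measure_Ioc_lt_top.ne)
        ((hw'meas.pow_const 2).aestronglyMeasurable.restrict) (ae_of_all _ fun θ => ?_)
      rw [Real.norm_eq_abs, abs_pow]
      exact pow_le_pow_left₀ (abs_nonneg _) (hw'bdd θ) 2
    · -- not a.e. zero
      intro hae
      have hval : Real.sin (Rayleigh.tauFun d (Rayleigh.sigmaFun d (π/2))) = 1 := by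
        rw [hτσ, Real.sin_pi_div_two]
      have hopen : IsOpen {θ : ℝ | Real.sin (Rayleigh.tauFun d θ) ≠ 0} :=
        (isOpen_compl_singleton).preimage hwcont
      have hnull : volume {θ : ℝ | ¬ Real.sin (Rayleigh.tauFun d θ) = 0} = 0 := ae_iff.1 hae
      have hpos := hopen.measure_pos volume
        ⟨Rayleigh.sigmaFun d (π/2), by simp only [mem_setOf_eq, hval]; norm_num⟩
      rw [show {θ : ℝ | Real.sin (Rayleigh.tauFun d θ) ≠ 0}
        = {θ : ℝ | ¬ Real.sin (Rayleigh.tauFun d θ) = 0} from rfl, hnull] at hpos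
      exact lt_irrefl 0 hpos
    · -- constraint
      rw [intervalIntegral.integral_of_le h2π.le]
      have h1 : ∀ θ, a θ * Real.sin (Rayleigh.tauFun d θ)
          = (A/(2*π)) * (Real.sin (Rayleigh.tauFun d θ) * d θ) := by
        intro θ
        rw [hddef]
        field_simp
      rw [setIntegral_congr_fun measurableSet_Ioc (fun θ _ => h1 θ), integral_const_mul,
        ← hTrans Real.sin Real.continuous_sin.aestronglyMeasurable.restrict,
        ← intervalIntegral.integral_of_le h2π.le, integral_sin]
      simp [Real.cos_two_pi]
    · -- the value
      have hNum : ∫ θ in (0:ℝ)..(2*π), 1 / a θ * (Real.cos (Rayleigh.tauFun d θ) * d θ)^2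
          = (2*π/A) * π := by
        rw [intervalIntegral.integral_of_le h2π.le]
        have h1 : ∀ θ, 1 / a θ * (Real.cos (Rayleigh.tauFun d θ) * d θ)^2
            = (2*π/A) * ((fun u => Real.cos u ^ 2) (Rayleigh.tauFun d θ) * d θ) := by
          intro θ
          have ha := (hapos θ).ne'
          rw [hddef]
          simp only
          field_simp
        rw [setIntegral_congr_fun measurableSet_Ioc (fun θ _ => h1 θ), integral_const_mul,
          ← hTrans (fun u => Real.cos u ^ 2)
            ((Real.continuous_cos.pow 2).aestronglyMeasurable.restrict),
          ← intervalIntegral.integral_of_le h2π.le, integral_cos_sq]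
        simp only [Real.sin_two_pi, Real.cos_two_pi, Real.sin_zero, Real.cos_zero]
        ring
      have hDen : ∫ θ in (0:ℝ)..(2*π), a θ * (Real.sin (Rayleigh.tauFun d θ))^2
          = (A/(2*π)) * π := by
        rw [intervalIntegral.integral_of_le h2π.le]
        have h1 : ∀ θ, a θ * (Real.sin (Rayleigh.tauFun d θ))^2
            = (A/(2*π)) * ((fun u => Real.sin u ^ 2) (Rayleigh.tauFun d θ) * d θ) := by
          intro θ
          rw [hddef]
          simp only
          field_simp
        rw [setIntegral_congr_fun measurableSet_Ioc (fun θ _ => h1 θ), integral_const_mul,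
          ← hTrans (fun u => Real.sin u ^ 2)
            ((Real.continuous_sin.pow 2).aestronglyMeasurable.restrict),
          ← intervalIntegral.integral_of_le h2π.le, integral_sin_sq]
        simp only [Real.sin_two_pi, Real.cos_two_pi, Real.sin_zero, Real.cos_zero]
        ring
      rw [hNum, hDen]
      have hπ0 : π ≠ 0 := Real.pi_ne_zero
      have hA0 : A ≠ 0 := hA.ne'
      field_simp
  · -- LOWER BOUND
    rintro I ⟨w, w', ⟨hwper, ⟨hw'loc, hwFTC⟩, hw'sq⟩, hne, hcons, hIdef⟩
    have hwII : ∀ x y : ℝ, IntervalIntegrable w' volume x y := by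
      intro x y
      rw [intervalIntegrable_iff]
      exact ((locallyIntegrable_iff.1 hw'loc) _ isCompact_uIcc).mono_set uIoc_subset_uIcc
    have hwcont : Continuous w := by
      rw [show w = fun θ => w 0 + ∫ s in (0:ℝ)..θ, w' s from funext hwFTC]
      exact continuous_const.add (intervalIntegral.continuous_primitive hwII 0)
    -- measurable representative of w'
    set h := (hw'loc.aestronglyMeasurable).mk w' with hhdef
    have hhm : Measurable h := (hw'loc.aestronglyMeasurable).measurable_mk
    have haeh : w' =ᵐ[volume] h := (hw'loc.aestronglyMeasurable).ae_eq_mk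
    set N := ∫ θ in (0:ℝ)..(2*π), 1 / a θ * w' θ^2 with hNdef
    set D := ∫ θ in (0:ℝ)..(2*π), a θ * w θ^2 with hDdef
    have hNh : N = ∫ θ in Ioc (0:ℝ) (2*π), 1 / a θ * h θ^2 := by
      rw [hNdef, intervalIntegral.integral_of_le h2π.le]
      apply integral_congr_ae
      filter_upwards [ae_restrict_of_ae haeh] with θ hθ
      rw [hθ]
    have hsqh : IntegrableOn (fun θ => h θ^2) (Ioc 0 (2*π)) volume := by
      apply hw'sq.congr
      filter_upwards [ae_restrict_of_ae haeh] with θ hθ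
      rw [hθ]
    have hNint : IntegrableOn (fun θ => 1 / a θ * h θ^2) (Ioc 0 (2*π)) volume := by
      refine Integrable.mono' (hsqh.const_mul (1/m))
        (((hameas.const_div 1).mul (hhm.pow_const 2)).aestronglyMeasurable.restrict)
        (ae_of_all _ fun θ => ?_)
      rw [Real.norm_eq_abs, abs_mul, abs_of_pos (div_pos one_pos (hapos θ)), abs_pow,
        sq_abs]
      apply mul_le_mul_of_nonneg_right _ (sq_nonneg _)
      rw [div_le_div_iff₀ (hapos θ) hm]
      nlinarith [(hbd θ).1, (hapos θ).le]
    have hFTCh : ∀ θ, w θ = w 0 + ∫ s in (0:ℝ)..θ, h s := by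
      intro θ
      rw [hwFTC θ]
      congr 1
      apply intervalIntegral.integral_congr_ae
      filter_upwards [haeh] with s hs _
      exact hs
    -- change variables
    have hσmeas : Measurable (Rayleigh.sigmaFun d) := hσcont.measurable
    have hg0m : Measurable (fun u => h (Rayleigh.sigmaFun d u) / d (Rayleigh.sigmaFun d u)) :=
      (hhm.comp hσmeas).div (hdm.comp hσmeas)
    have hGm : Measurable ((Ioc (0:ℝ) (2*π)).indicator
        (fun u => h (Rayleigh.sigmaFun d u) / d (Rayleigh.sigmaFun d u))) :=
      hg0m.indicator measurableSet_Ioc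
    have hvcont : Continuous (fun u => w (Rayleigh.sigmaFun d u)) := hwcont.comp hσcont
    have hg0τ : ∀ θ, (fun u => h (Rayleigh.sigmaFun d u) / d (Rayleigh.sigmaFun d u))
        (Rayleigh.tauFun d θ) = h θ / d θ := by
      intro θ
      simp only
      rw [hστ θ]
    have hg0sq : IntegrableOn
        (fun u => (h (Rayleigh.sigmaFun d u) / d (Rayleigh.sigmaFun d u))^2)
        (Ioc 0 (2*π)) volume := by
      rw [hTransInt _ ((hg0m.pow_const 2).aestronglyMeasurable.restrict)]
      refine (hNint.const_mul (A/(2*π))).congr (ae_of_all _ fun θ => ?_)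
      have ha := (hapos θ).ne'
      have hπ' := h2π.ne'
      simp only [hστ]; simp only [hddef]
      field_simp
    have hg0int : IntegrableOn (fun u => h (Rayleigh.sigmaFun d u) / d (Rayleigh.sigmaFun d u))
        (Ioc 0 (2*π)) volume := by
      have hone : IntegrableOn (fun _ : ℝ => (1:ℝ)) (Ioc 0 (2*π)) volume :=
        integrableOn_const measure_Ioc_lt_top.ne
      have hsum : IntegrableOn
          (fun u => (h (Rayleigh.sigmaFun d u) / d (Rayleigh.sigmaFun d u))^2 + 1)
          (Ioc 0 (2*π)) volume := by
        have := hg0sq.add hone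
        exact this
      have hhalf : IntegrableOn
          (fun u => ((h (Rayleigh.sigmaFun d u) / d (Rayleigh.sigmaFun d u))^2 + 1)/2)
          (Ioc 0 (2*π)) volume := by
        have := hsum.div_const 2
        exact this
      refine Integrable.mono' hhalf
        hg0m.aestronglyMeasurable.restrict (ae_of_all _ fun u => ?_)
      rw [Real.norm_eq_abs]
      set z := h (Rayleigh.sigmaFun d u) / d (Rayleigh.sigmaFun d u)
      nlinarith [sq_nonneg (|z| - 1), sq_abs z]
    have hGint : Integrable ((Ioc (0:ℝ) (2*π)).indicator
        (fun u => h (Rayleigh.sigmaFun d u) / d (Rayleigh.sigmaFun d u))) volume := by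
      rw [integrable_indicator_iff measurableSet_Ioc]
      exact hg0int
    have hG2 : IntegrableOn (fun u => ((Ioc (0:ℝ) (2*π)).indicator
        (fun u => h (Rayleigh.sigmaFun d u) / d (Rayleigh.sigmaFun d u)) u)^2)
        (Ioc 0 (2*π)) volume := by
      refine hg0sq.congr (ae_restrict_of_forall_mem measurableSet_Ioc fun u hu => ?_)
      simp only [indicator_of_mem hu]
    have hvFTC : ∀ u ∈ Icc (0:ℝ) (2*π), w (Rayleigh.sigmaFun d u)
        = w (Rayleigh.sigmaFun d 0) + ∫ s in (0:ℝ)..u, (Ioc (0:ℝ) (2*π)).indicator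
          (fun x => h (Rayleigh.sigmaFun d x) / d (Rayleigh.sigmaFun d x)) s := by
      intro u hu
      rw [intervalIntegral.integral_of_le hu.1]
      have e1 : ∫ s in Ioc (0:ℝ) u, (Ioc (0:ℝ) (2*π)).indicator
          (fun x => h (Rayleigh.sigmaFun d x) / d (Rayleigh.sigmaFun d x)) s
          = ∫ s in Ioc (0:ℝ) u, h (Rayleigh.sigmaFun d s) / d (Rayleigh.sigmaFun d s) := by
        refine setIntegral_congr_fun measurableSet_Ioc (fun s hs => ?_)
        simp only [indicator_of_mem
          (show s ∈ Ioc (0:ℝ) (2*π) from ⟨hs.1, le_trans hs.2 hu.2⟩)]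
      have e2 := Rayleigh.integral_transfer hdm hbd' hm'
        (f := fun x => h (Rayleigh.sigmaFun d x) / d (Rayleigh.sigmaFun d x)) (x := 0) (y := u)
        hg0m.aestronglyMeasurable.restrict
      rw [hσ0] at e2
      have e3 : ∫ θ in Ioc (0:ℝ) (Rayleigh.sigmaFun d u),
          (fun x => h (Rayleigh.sigmaFun d x) / d (Rayleigh.sigmaFun d x))
            (Rayleigh.tauFun d θ) * d θ
          = ∫ θ in Ioc (0:ℝ) (Rayleigh.sigmaFun d u), h θ := by
        refine setIntegral_congr_fun measurableSet_Ioc (fun θ _ => ?_)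
        rw [hg0τ θ]
        exact div_mul_cancel₀ _ (hdpos θ).ne'
      have hσu0 : (0:ℝ) ≤ Rayleigh.sigmaFun d u := by
        rcases eq_or_lt_of_le hu.1 with h' | h'
        · rw [← h', hσ0]
        · have := (Rayleigh.sigma_strictMono hdm hbd' hm') h'
          rw [hσ0] at this
          exact this.le
      have e4 : ∫ θ in Ioc (0:ℝ) (Rayleigh.sigmaFun d u), h θ
          = w (Rayleigh.sigmaFun d u) - w 0 := by
        rw [← intervalIntegral.integral_of_le hσu0]
        have := hFTCh (Rayleigh.sigmaFun d u)
        linarith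
      rw [e1, e2, e3, e4, hσ0]
      ring
    have hvper : w (Rayleigh.sigmaFun d (2*π)) = w (Rayleigh.sigmaFun d 0) := by
      rw [hσ2π, hσ0]
      have := hwper 0
      rw [zero_add] at this
      exact this
    have hvmean : ∫ u in Ioc (0:ℝ) (2*π), w (Rayleigh.sigmaFun d u) = 0 := by
      have e1 := hTrans _ (hvcont.aestronglyMeasurable.restrict)
      have e2 : ∫ θ in Ioc (0:ℝ) (2*π),
          (fun u => w (Rayleigh.sigmaFun d u)) (Rayleigh.tauFun d θ) * d θ
          = (2*π/A) * ∫ θ in Ioc (0:ℝ) (2*π), a θ * w θ := by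
        rw [← integral_const_mul]
        refine setIntegral_congr_fun measurableSet_Ioc (fun θ _ => ?_)
        simp only [hστ]; simp only [hddef]
        ring
      rw [e1, e2, ← intervalIntegral.integral_of_le h2π.le, hcons, mul_zero]
    have hwir := Rayleigh.wirtinger hvcont hGm hGint hG2 hvFTC hvper hvmean
    have hleft : ∫ u in Ioc (0:ℝ) (2*π), (w (Rayleigh.sigmaFun d u))^2
        = (2*π/A) * ∫ θ in Ioc (0:ℝ) (2*π), a θ * w θ^2 := by
      rw [hTrans (fun u => (w (Rayleigh.sigmaFun d u))^2)
        ((hvcont.pow 2).aestronglyMeasurable.restrict), ← integral_const_mul]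
      refine setIntegral_congr_fun measurableSet_Ioc (fun θ _ => ?_)
      simp only [hστ]; simp only [hddef]
      ring
    have hright : ∫ u in Ioc (0:ℝ) (2*π), ((Ioc (0:ℝ) (2*π)).indicator
        (fun x => h (Rayleigh.sigmaFun d x) / d (Rayleigh.sigmaFun d x)) u)^2
        = (A/(2*π)) * ∫ θ in Ioc (0:ℝ) (2*π), 1 / a θ * h θ^2 := by
      have e1 : ∫ u in Ioc (0:ℝ) (2*π), ((Ioc (0:ℝ) (2*π)).indicator
          (fun x => h (Rayleigh.sigmaFun d x) / d (Rayleigh.sigmaFun d x)) u)^2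
          = ∫ u in Ioc (0:ℝ) (2*π),
            (h (Rayleigh.sigmaFun d u) / d (Rayleigh.sigmaFun d u))^2 :=
        setIntegral_congr_fun measurableSet_Ioc (fun u hu => by rw [indicator_of_mem hu])
      rw [e1, hTrans (fun u => (h (Rayleigh.sigmaFun d u) / d (Rayleigh.sigmaFun d u))^2)
        ((hg0m.pow_const 2).aestronglyMeasurable.restrict), ← integral_const_mul]
      refine setIntegral_congr_fun measurableSet_Ioc (fun θ _ => ?_)
      have ha := (hapos θ).ne'
      have hπ' := h2π.ne'
      simp only [hστ]; simp only [hddef]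
      field_simp
    -- positivity of the denominator
    have hDIoc : D = ∫ θ in Ioc (0:ℝ) (2*π), a θ * w θ^2 := by
      rw [hDdef, intervalIntegral.integral_of_le h2π.le]
    have hDint : IntegrableOn (fun θ => a θ * w θ^2) (Ioc 0 (2*π)) volume := by
      refine Integrable.bdd_mul (c := M) ((hwcont.pow 2).integrableOn_Ioc)
        hameas.aestronglyMeasurable.restrict (ae_of_all _ fun θ => ?_)
      rw [Real.norm_eq_abs, abs_of_pos (hapos θ)]
      exact (hbd θ).2
    have hDpos : 0 < D := by
      rw [hDIoc]
      rw [setIntegral_pos_iff_support_of_nonneg_ae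
        (ae_of_all _ fun θ => mul_nonneg (hapos θ).le (sq_nonneg _)) hDint]
      by_contra hle
      push_neg at hle
      have hzero : volume (support (fun θ => a θ * w θ^2) ∩ Ioc 0 (2*π)) = 0 :=
        nonpos_iff_eq_zero.1 hle
      have hwz : ∀ θ ∈ Ioo (0:ℝ) (2*π), w θ = 0 := by
        by_contra hc
        push_neg at hc
        obtain ⟨θ₀, hθ₀, hwθ₀⟩ := hc
        have hU : IsOpen ({θ : ℝ | w θ ≠ 0} ∩ Ioo 0 (2*π)) :=
          ((isOpen_compl_singleton).preimage hwcont).inter isOpen_Ioo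
        have hUsub : ({θ : ℝ | w θ ≠ 0} ∩ Ioo 0 (2*π))
            ⊆ support (fun θ => a θ * w θ^2) ∩ Ioc 0 (2*π) := by
          rintro θ ⟨hθ1, hθ2⟩
          refine ⟨?_, Ioo_subset_Ioc_self hθ2⟩
          simp only [mem_support]
          have hw2 : 0 < w θ^2 :=
            lt_of_le_of_ne (sq_nonneg _) (Ne.symm (pow_ne_zero 2 hθ1))
          exact (mul_pos (hapos θ) hw2).ne'
        have := (hU.measure_pos volume ⟨θ₀, hwθ₀, hθ₀⟩).trans_le (measure_mono hUsub)
        rw [hzero] at this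
        exact lt_irrefl 0 this
      have hIcc : EqOn w 0 (Icc (0:ℝ) (2*π)) := by
        have hclos : closure (Ioo (0:ℝ) (2*π)) = Icc (0:ℝ) (2*π) :=
          closure_Ioo (ne_of_lt h2π)
        rw [← hclos]
        exact EqOn.closure (fun θ hθ => hwz θ hθ) hwcont continuous_const
      have hall : ∀ θ, w θ = 0 := by
        intro θ
        obtain ⟨y, hy, hwy⟩ := hwper.exists_mem_Ico₀ h2π θ
        rw [hwy]
        exact hIcc ⟨hy.1, hy.2.le⟩
      exact hne (ae_of_all _ hall)
    -- put it together
    have h1 : (2*π/A) * (∫ θ in Ioc (0:ℝ) (2*π), a θ * w θ^2)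
        ≤ (A/(2*π)) * ∫ θ in Ioc (0:ℝ) (2*π), 1 / a θ * h θ^2 := by
      rw [← hleft, ← hright]
      exact hwir
    have h2 : (2*π/A)^2 * D ≤ N := by
      rw [hDIoc, hNh]
      have h3 := mul_le_mul_of_nonneg_left h1 hc2.le
      calc (2*π/A)^2 * ∫ θ in Ioc (0:ℝ) (2*π), a θ * w θ^2
          = (2*π/A) * ((2*π/A) * ∫ θ in Ioc (0:ℝ) (2*π), a θ * w θ^2) := by ring
        _ ≤ (2*π/A) * ((A/(2*π)) * ∫ θ in Ioc (0:ℝ) (2*π), 1 / a θ * h θ^2) := h3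
        _ = ∫ θ in Ioc (0:ℝ) (2*π), 1 / a θ * h θ^2 := by
            have hA0 : A ≠ 0 := hA.ne'
            have hπ0 : π ≠ 0 := Real.pi_ne_zero
            field_simp
    rw [hIdef, le_div_iff₀ hDpos]
    exact h2
end
end
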